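/- Let Q : ℝⁿ → ℝ^{n×n} be a continuous symmetric positive-semidefinite matrix function of constant rank m, and H : ℝⁿ → ℝ^{n×n} a continuous symmetric matrix function with ker Q(x) ⊆ ker H(x) for all x. Then the function ψ(x) = σ_max(H(x))/d_min(x), where d_min(x) is the smallest nonzero eigenvalue of Q(x), is well-defined and satisfies |δ'H(x)δ| ≤ ψ(x)·δ'Q(x)δ for all x, δ. Moreover, if d_min is continuous and strictly positive, ψ is continuous. -/

import Mathlib

open Matrix

/-- Smallest nonzero eigenvalue of a matrix. -/
noncomputable def dmin {n : ℕ} (A : Matrix (Fin n) (Fin n) ℝ) : ℝ :=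
  sInf {r : ℝ | 0 < r ∧ ∃ δ : Fin n → ℝ, δ ≠ 0 ∧ A *ᵥ δ = r • δ}

/-- Largest singular value (for symmetric matrices: max of |δ'Aδ| over the unit
sphere). -/
noncomputable def sigmaMax {n : ℕ} (A : Matrix (Fin n) (Fin n) ℝ) : ℝ :=
  sSup {y : ℝ | ∃ δ : Fin n → ℝ, δ ⬝ᵥ δ = 1 ∧ y = |δ ⬝ᵥ A *ᵥ δ|}

/-!
Diagonalize `Q = U diag(λ) Uᵀ` and let `w` be the component of `δ` along the eigenvectors with
`λᵢ ≠ 0`. Then `δ - w ∈ ker Q ⊆ ker H`, so symmetry of `H` gives `δ'Hδ = w'Hw`, which is at most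
`σ_max(H) ‖w‖²` in absolute value, while `d_min ‖w‖² ≤ ∑ λᵢ (Uᵀδ)ᵢ² = δ'Qδ`. The positive
eigenvalues form a finite set, nonempty since `Q ≠ 0`, so `d_min` is one of them. `σ_max` is the
supremum of a jointly continuous function over the compact unit sphere, hence continuous.
-/

namespace Matrix

section General

variable {ι : Type*} [Fintype ι]

theorem isCompact_setOf_dotProduct_self_eq_one :
    IsCompact {v : ι → ℝ | v ⬝ᵥ v = 1} := by
  refine (isCompact_closedBall (0 : ι → ℝ) 1).of_isClosed_subset
    (isClosed_eq (continuous_id.dotProduct continuous_id) continuous_const) fun v hv => ?_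
  rw [Set.mem_ofPred_eq] at hv
  rw [mem_closedBall_zero_iff, pi_norm_le_iff_of_nonneg zero_le_one]
  intro i
  rw [Real.norm_eq_abs, abs_le_one_iff_mul_self_le_one, ← hv]
  exact Finset.single_le_sum (fun j _ => mul_self_nonneg (v j)) (Finset.mem_univ i)

theorem IsSymm.dotProduct_mulVec_eq_of_mulVec_sub_eq_zero {R : Type*} [CommRing R]
    {B : Matrix ι ι R} (hB : B.IsSymm) {v w : ι → R} (h : B *ᵥ (v - w) = 0) : v ⬝ᵥ B *ᵥ v = w ⬝ᵥ B *ᵥ w := by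
  have hBv : B *ᵥ v = B *ᵥ w := sub_eq_zero.mp (by rwa [← mulVec_sub])
  have hcross : v ⬝ᵥ B *ᵥ w = w ⬝ᵥ B *ᵥ v := by
    rw [dotProduct_mulVec, ← mulVec_transpose, hB.eq, dotProduct_comm]
  rw [hBv, hcross, hBv]

variable [DecidableEq ι]

theorem IsHermitian.exists_eq_mul_diagonal_mul_transpose {A : Matrix ι ι ℝ}
    (hA : A.IsHermitian) :
    ∃ U : Matrix ι ι ℝ, Uᵀ * U = 1 ∧ A = U * diagonal hA.eigenvalues * Uᵀ := by
  refine ⟨hA.eigenvectorUnitary, ?_, ?_⟩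
  · rw [← conjTranspose_eq_transpose_of_trivial, ← star_eq_conjTranspose]
    exact Unitary.coe_star_mul_self _
  · conv_lhs => rw [hA.spectral_theorem]
    rw [Unitary.conjStarAlgAut_apply, star_eq_conjTranspose,
      conjTranspose_eq_transpose_of_trivial, RCLike.ofReal_real_eq_id, Function.id_comp]

theorem exists_mulVec_sub_eq_zero_and_mul_dotProduct_le {U : Matrix ι ι ℝ} (hU : Uᵀ * U = 1)
    {d : ι → ℝ} {c : ℝ} (hc : ∀ i, d i ≠ 0 → c ≤ d i) (v : ι → ℝ) :
    ∃ w, (U * diagonal d * Uᵀ) *ᵥ (v - w) = 0 ∧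
      c * (w ⬝ᵥ w) ≤ v ⬝ᵥ (U * diagonal d * Uᵀ) *ᵥ v := by
  set e := Uᵀ *ᵥ v
  set e' : ι → ℝ := fun i => if d i = 0 then 0 else e i
  refine ⟨U *ᵥ e', ?_, ?_⟩
  · have hdiag : diagonal d *ᵥ (e - e') = 0 := by
      ext i
      by_cases hi : d i = 0 <;> simp [mulVec_diagonal, e', hi]
    have hUe' : Uᵀ *ᵥ (U *ᵥ e') = e' := by rw [mulVec_mulVec, hU, one_mulVec]
    rw [← mulVec_mulVec, ← mulVec_mulVec, mulVec_sub, hUe', hdiag, mulVec_zero]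
  · have hw : U *ᵥ e' ⬝ᵥ U *ᵥ e' = e' ⬝ᵥ e' := by
      rw [dotProduct_mulVec, ← mulVec_transpose, mulVec_mulVec, hU, one_mulVec, dotProduct_comm]
    have hv : v ⬝ᵥ (U * diagonal d * Uᵀ) *ᵥ v = e ⬝ᵥ diagonal d *ᵥ e := by
      rw [← mulVec_mulVec, ← mulVec_mulVec, dotProduct_mulVec, ← mulVec_transpose]
    rw [hw, hv, dotProduct, dotProduct, Finset.mul_sum]
    refine Finset.sum_le_sum fun i _ => ?_
    by_cases hi : d i = 0
    · simp [mulVec_diagonal, e', hi]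
    · simp only [mulVec_diagonal, e', hi, if_false]
      nlinarith [hc i hi, mul_self_nonneg (e i)]

end General

variable {n : ℕ}

theorem sigmaMax_eq_sSup_image (A : Matrix (Fin n) (Fin n) ℝ) :
    sigmaMax A = sSup ((fun v => |v ⬝ᵥ A *ᵥ v|) '' {v | v ⬝ᵥ v = 1}) := by
  simp only [sigmaMax, Set.image, Set.mem_ofPred_eq, eq_comm]

theorem continuous_sigmaMax : Continuous (sigmaMax : Matrix (Fin n) (Fin n) ℝ → ℝ) := by
  simp only [funext sigmaMax_eq_sSup_image]
  exact isCompact_setOf_dotProduct_self_eq_one.continuous_sSup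
    (continuous_snd.dotProduct (continuous_fst.matrix_mulVec continuous_snd)).abs

theorem sigmaMax_nonneg (A : Matrix (Fin n) (Fin n) ℝ) : 0 ≤ sigmaMax A :=
  Real.sSup_nonneg fun _ ⟨_, _, hy⟩ => hy ▸ abs_nonneg _

theorem abs_dotProduct_mulVec_le_sigmaMax (A : Matrix (Fin n) (Fin n) ℝ) {u : Fin n → ℝ}
    (hu : u ⬝ᵥ u = 1) : |u ⬝ᵥ A *ᵥ u| ≤ sigmaMax A := by
  rw [sigmaMax_eq_sSup_image]
  exact le_csSup (isCompact_setOf_dotProduct_self_eq_one.image_of_continuousOn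
    (by fun_prop)).bddAbove ⟨u, hu, rfl⟩

theorem abs_dotProduct_mulVec_le_sigmaMax_mul (A : Matrix (Fin n) (Fin n) ℝ) (v : Fin n → ℝ) :
    |v ⬝ᵥ A *ᵥ v| ≤ sigmaMax A * (v ⬝ᵥ v) := by
  rcases eq_or_ne v 0 with rfl | hv
  · simp
  have hs : 0 < v ⬝ᵥ v := by simpa using dotProduct_self_star_pos_iff.mpr hv
  set r := √(v ⬝ᵥ v)
  have hr : 0 < r := Real.sqrt_pos.mpr hs
  have hrr : r * r = v ⬝ᵥ v := Real.mul_self_sqrt hs.le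
  have hu : r⁻¹ • v ⬝ᵥ r⁻¹ • v = 1 := by
    rw [smul_dotProduct, dotProduct_smul, ← hrr, smul_eq_mul, smul_eq_mul]
    field_simp
  have h := abs_dotProduct_mulVec_le_sigmaMax A hu
  rw [mulVec_smul, smul_dotProduct, dotProduct_smul, smul_eq_mul, smul_eq_mul, ← mul_assoc,
    abs_mul, abs_of_pos (by positivity), ← mul_inv, hrr, inv_mul_le_iff₀ hs, mul_comm] at h
  exact h

end Matrix

theorem dmin_le_of_mulVec_eq_smul {n : ℕ} {A : Matrix (Fin n) (Fin n) ℝ} {r : ℝ} {v : Fin n → ℝ}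
    (hr : 0 < r) (hv : v ≠ 0) (h : A *ᵥ v = r • v) : dmin A ≤ r :=
  csInf_le ⟨0, fun _ hs => hs.1.le⟩ ⟨hr, v, hv, h⟩

namespace Matrix.PosSemidef

variable {n : ℕ} {A : Matrix (Fin n) (Fin n) ℝ}

theorem dmin_le_eigenvalues (hA : A.PosSemidef) (i : Fin n) (hi : hA.1.eigenvalues i ≠ 0) :
    dmin A ≤ hA.1.eigenvalues i :=
  dmin_le_of_mulVec_eq_smul ((hA.eigenvalues_nonneg i).lt_of_ne' hi)
    ((WithLp.ofLp_eq_zero 2).ne.2 <| hA.1.eigenvectorBasis.orthonormal.ne_zero i)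
    (hA.1.mulVec_eigenvectorBasis i)

theorem dmin_pos (hA : A.PosSemidef) (hA0 : A ≠ 0) : 0 < dmin A := by
  set S := {r : ℝ | 0 < r ∧ ∃ δ : Fin n → ℝ, δ ≠ 0 ∧ A *ᵥ δ = r • δ}
  have hS : S ⊆ spectrum ℝ A := fun r ⟨_, v, hv, h⟩ => by
    rw [← spectrum_toLin']
    exact Module.End.HasEigenvalue.mem_spectrum
      (Module.End.hasEigenvalue_of_hasEigenvector ⟨by simpa using h, hv⟩)
  obtain ⟨i, hi⟩ := Function.ne_iff.mp ((hA.1.eigenvalues_eq_zero_iff).not.mpr hA0)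
  have hne : S.Nonempty := ⟨_, (hA.eigenvalues_nonneg i).lt_of_ne' hi,
    _, (WithLp.ofLp_eq_zero 2).ne.2 <| hA.1.eigenvectorBasis.orthonormal.ne_zero i,
    hA.1.mulVec_eigenvectorBasis i⟩
  exact (hne.csInf_mem (finite_real_spectrum.subset hS)).1

theorem exists_mulVec_sub_eq_zero_and_dmin_mul_le (hA : A.PosSemidef) (v : Fin n → ℝ) :
    ∃ w, A *ᵥ (v - w) = 0 ∧ dmin A * (w ⬝ᵥ w) ≤ v ⬝ᵥ A *ᵥ v := by
  obtain ⟨U, hU, hAU⟩ := hA.1.exists_eq_mul_diagonal_mul_transpose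
  have := exists_mulVec_sub_eq_zero_and_mul_dotProduct_le hU
    hA.dmin_le_eigenvalues v
  rwa [← hAU] at this

theorem abs_dotProduct_mulVec_le_sigmaMax_div_dmin_mul (hA : A.PosSemidef) (hA0 : A ≠ 0)
    {B : Matrix (Fin n) (Fin n) ℝ} (hB : B.IsSymm) (hker : ∀ v, A *ᵥ v = 0 → B *ᵥ v = 0)
    (v : Fin n → ℝ) : |v ⬝ᵥ B *ᵥ v| ≤ sigmaMax B / dmin A * (v ⬝ᵥ A *ᵥ v) := by
  obtain ⟨w, hw, hdw⟩ := hA.exists_mulVec_sub_eq_zero_and_dmin_mul_le v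
  have hd := hA.dmin_pos hA0
  calc |v ⬝ᵥ B *ᵥ v| = |w ⬝ᵥ B *ᵥ w| := by
        rw [hB.dotProduct_mulVec_eq_of_mulVec_sub_eq_zero (hker _ hw)]
    _ ≤ sigmaMax B * (w ⬝ᵥ w) := abs_dotProduct_mulVec_le_sigmaMax_mul B w
    _ = sigmaMax B / dmin A * (dmin A * (w ⬝ᵥ w)) := by field_simp
    _ ≤ sigmaMax B / dmin A * (v ⬝ᵥ A *ᵥ v) :=
        mul_le_mul_of_nonneg_left hdw (div_nonneg (sigmaMax_nonneg B) hd.le)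

end Matrix.PosSemidef

theorem stmt16_general {n k m : ℕ} (hm : 1 ≤ m)
    (Q H : (Fin k → ℝ) → Matrix (Fin n) (Fin n) ℝ)
    (hHcont : Continuous H)
    (hQ : ∀ x, (Q x).PosSemidef) (hH : ∀ x, (H x).IsSymm)
    (hrank : ∀ x, (Q x).rank = m)
    (hker : ∀ x (δ : Fin n → ℝ), Q x *ᵥ δ = 0 → H x *ᵥ δ = 0) :
    (∀ x, 0 < dmin (Q x)) ∧
    (∀ x (δ : Fin n → ℝ),
        |δ ⬝ᵥ H x *ᵥ δ| ≤ (sigmaMax (H x) / dmin (Q x)) * (δ ⬝ᵥ Q x *ᵥ δ)) ∧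
    ((Continuous fun x => dmin (Q x)) →
        Continuous fun x => sigmaMax (H x) / dmin (Q x)) := by
  have hQ0 : ∀ x, Q x ≠ 0 := fun x hx => by
    have := hrank x
    rw [hx, rank_zero] at this
    omega
  have hdmin : ∀ x, 0 < dmin (Q x) := fun x => (hQ x).dmin_pos (hQ0 x)
  refine ⟨hdmin, fun x => (hQ x).abs_dotProduct_mulVec_le_sigmaMax_div_dmin_mul (hQ0 x) (hH x)
    (hker x), fun hdcont => ?_⟩
  exact (continuous_sigmaMax.comp hHcont).div hdcont fun x => (hdmin x).ne'

/-- If Q(x) is continuous, symmetric PSD of constant rank m ≥ 1 and H(x) is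
continuous symmetric with ker Q(x) ⊆ ker H(x), then ψ(x) = σ_max(H(x))/d_min(x)
is well-defined (d_min > 0), satisfies |δ'H(x)δ| ≤ ψ(x)·δ'Q(x)δ, and is
continuous whenever d_min is continuous (and strictly positive). -/
theorem stmt16 {n k m : ℕ} (hm : 1 ≤ m)
    (Q H : (Fin k → ℝ) → Matrix (Fin n) (Fin n) ℝ)
    (hQcont : Continuous Q) (hHcont : Continuous H)
    (hQ : ∀ x, (Q x).PosSemidef) (hH : ∀ x, (H x).IsSymm)
    (hrank : ∀ x, (Q x).rank = m)
    (hker : ∀ x (δ : Fin n → ℝ), Q x *ᵥ δ = 0 → H x *ᵥ δ = 0) :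
    (∀ x, 0 < dmin (Q x)) ∧
    (∀ x (δ : Fin n → ℝ),
        |δ ⬝ᵥ H x *ᵥ δ| ≤ (sigmaMax (H x) / dmin (Q x)) * (δ ⬝ᵥ Q x *ᵥ δ)) ∧
    ((Continuous fun x => dmin (Q x)) →
        Continuous fun x => sigmaMax (H x) / dmin (Q x)) :=
  stmt16_general hm Q H hHcont hQ hH hrank hker
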